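/- arXiv:1904.05870 — 5 statements merged into one kernel-verified Lean document; each statement's English description precedes it below -/
import Mathlib

section
/- Let f : F_q^{ℓ+m} → F_q be a polynomial of total degree at most d which is not exactly linear in the first ℓ variables x (i.e., f cannot be written as Σ_{i=1}^{ℓ} x_i·f_i(y) for polynomials f_i in the last m variables y). Then the probability over uniformly random y ∈ F_q^m that the restricted polynomial x ↦ f(x,y) is exactly linear (a homogeneous linear form Σ_i c_i x_i) is at most d/q. -/
/-- The restriction `f|_y : x ↦ f(x, y)` of a polynomial in variables `x ⊕ y` obtained by
substituting the point `y` for the last block of variables. -/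
noncomputable def restrictY {F : Type*} [CommSemiring F] {l m : ℕ}
    (f : MvPolynomial (Fin l ⊕ Fin m) F) (y : Fin m → F) : MvPolynomial (Fin l) F :=
  MvPolynomial.aeval (Sum.elim MvPolynomial.X fun j => MvPolynomial.C (y j)) f

/-- `f(x, y)` is exactly linear in the `x`-variables: `f = Σ_i x_i · f_i(y)`. -/
def ExactlyLinearInX {F : Type*} [CommSemiring F] {l m : ℕ}
    (f : MvPolynomial (Fin l ⊕ Fin m) F) : Prop :=
  ∃ g : Fin l → MvPolynomial (Fin m) F,
    f = ∑ i, MvPolynomial.X (Sum.inl i) * MvPolynomial.rename Sum.inr (g i)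

/-- A polynomial in the `x`-variables is exactly linear: a homogeneous linear form
`Σ_i c_i x_i` with no constant term. -/
def ExactlyLinear {F : Type*} [CommSemiring F] {l : ℕ}
    (f : MvPolynomial (Fin l) F) : Prop :=
  ∃ c : Fin l → F, f = ∑ i, MvPolynomial.C (c i) * MvPolynomial.X i

/-!
View `f` as a polynomial `P` in `x` whose coefficients `P_α` are polynomials in `y`, of degree
at most `deg f`. Since `f` is not exactly linear in `x`, some `P_α` with `α` not a unit exponent
is nonzero, and `f|_y` can only be exactly linear when `P_α(y) = 0`. By Schwartz–Zippel this
happens for at most a `deg P_α / q ≤ d / q` fraction of the points `y`.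
-/

open MvPolynomial Finset

namespace MvPolynomial

variable {R S₁ S₂ : Type*} [CommSemiring R]

theorem coeff_coeff_sumAlgEquiv (f : MvPolynomial (S₁ ⊕ S₂) R) (α : S₁ →₀ ℕ)
    (β : S₂ →₀ ℕ) :
    coeff β (coeff α (sumAlgEquiv R S₁ S₂ f)) = coeff (Finsupp.sumElim α β) f := by
  simp [sumAlgEquiv, coeff, AddMonoidAlgebra.curryAlgEquiv, AddMonoidAlgebra.curryRingEquiv,
    AddMonoidAlgebra.curryAddEquiv]

theorem totalDegree_coeff_sumAlgEquiv_le (f : MvPolynomial (S₁ ⊕ S₂) R)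
    (α : S₁ →₀ ℕ) :
    (coeff α (sumAlgEquiv R S₁ S₂ f)).totalDegree ≤ f.totalDegree := by
  refine Finset.sup_le fun β hβ => ?_
  have hαβ : Finsupp.sumElim α β ∈ f.support := by
    rwa [mem_support_iff, ← coeff_coeff_sumAlgEquiv, ← mem_support_iff]
  calc (β.sum fun _ e => e) ≤ (Finsupp.sumElim α β).sum fun _ e => e := by
        rw [Finsupp.sum_sumElim]
        exact le_add_self
    _ ≤ f.totalDegree := le_totalDegree hαβ

theorem aeval_sumElim_X_C_eq_map_eval_sumAlgEquiv (f : MvPolynomial (S₁ ⊕ S₂) R)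
    (y : S₂ → R) :
    aeval (Sum.elim X fun j => C (y j)) f = map (eval y) (sumAlgEquiv R S₁ S₂ f) := by
  induction f using MvPolynomial.induction_on with
  | C r => simp
  | add p q hp hq => simp_all
  | mul_X p i hp => cases i <;> simp_all

end MvPolynomial

section LinearForms

variable {R : Type*} [CommSemiring R] {l : ℕ}

theorem coeff_sum_C_mul_X_of_forall_ne (c : Fin l → R) {α : Fin l →₀ ℕ}
    (hα : ∀ i, α ≠ Finsupp.single i 1) :
    coeff α (∑ i, C (c i) * X i) = 0 := by
  rw [coeff_sum]
  exact sum_eq_zero fun i _ => by simp [coeff_C_mul, coeff_X, (hα i).symm]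

theorem coeff_single_sum_C_mul_X (c : Fin l → R) (i : Fin l) :
    coeff (Finsupp.single i 1) (∑ j, C (c j) * X j) = c i := by
  classical
  simp [coeff_sum, coeff_C_mul, coeff_X, Finsupp.single_left_inj one_ne_zero]

theorem ExactlyLinear.coeff_eq_zero {p : MvPolynomial (Fin l) R} (hp : ExactlyLinear p)
    {α : Fin l →₀ ℕ} (hα : ∀ i, α ≠ Finsupp.single i 1) : coeff α p = 0 := by
  obtain ⟨c, rfl⟩ := hp
  exact coeff_sum_C_mul_X_of_forall_ne c hα

theorem exists_coeff_ne_zero_of_not_exactlyLinear {p : MvPolynomial (Fin l) R}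
    (hp : ¬ ExactlyLinear p) :
    ∃ α : Fin l →₀ ℕ, (∀ i, α ≠ Finsupp.single i 1) ∧ coeff α p ≠ 0 := by
  by_contra! h
  refine hp ⟨fun i => coeff (Finsupp.single i 1) p, ext _ _ fun α => ?_⟩
  by_cases hα : ∃ i, α = Finsupp.single i 1
  · obtain ⟨i, rfl⟩ := hα
    rw [coeff_single_sum_C_mul_X]
  · push Not at hα
    rw [h α hα, coeff_sum_C_mul_X_of_forall_ne _ hα]

theorem exactlyLinearInX_iff {m : ℕ} {f : MvPolynomial (Fin l ⊕ Fin m) R} :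
    ExactlyLinearInX f ↔ ExactlyLinear (sumAlgEquiv R (Fin l) (Fin m) f) := by
  have hsum (g : Fin l → MvPolynomial (Fin m) R) : sumAlgEquiv R (Fin l) (Fin m)
      (∑ i, X (Sum.inl i) * rename Sum.inr (g i)) = ∑ i, C (g i) * X i := by
    have hrename (g : MvPolynomial (Fin m) R) :
        sumAlgEquiv R (Fin l) (Fin m) (rename Sum.inr g) = C g :=
      DFunLike.congr_fun (sumAlgEquiv_comp_rename_inr R (Fin l) (Fin m)) g
    simp [mul_comm, hrename]
  simp only [ExactlyLinearInX, ExactlyLinear, ← hsum, (sumAlgEquiv R _ _).injective.eq_iff]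

end LinearForms

theorem coeff_restrictY {R : Type*} [CommSemiring R] {l m : ℕ}
    (f : MvPolynomial (Fin l ⊕ Fin m) R) (y : Fin m → R) (α : Fin l →₀ ℕ) :
    coeff α (restrictY f y) = eval y (coeff α (sumAlgEquiv R (Fin l) (Fin m) f)) := by
  rw [restrictY, aeval_sumElim_X_C_eq_map_eval_sumAlgEquiv, coeff_map]

theorem card_filter_eval_eq_zero_div_le {R : Type*} [CommRing R] [IsDomain R] [Fintype R]
    [DecidableEq R] {m : ℕ} {p : MvPolynomial (Fin m) R} (hp : p ≠ 0) :
    (#{y : Fin m → R | eval y p = 0} : ℝ) / Fintype.card (Fin m → R) ≤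
      p.totalDegree / Fintype.card R := by
  have h := schwartz_zippel_totalDegree hp univ
  rw [Fintype.piFinset_univ, card_univ] at h
  rw [Fintype.card_fun, Fintype.card_fin, Nat.cast_pow]
  simpa only [NNRat.cast_div, NNRat.cast_natCast, NNRat.cast_pow] using
    (NNRat.cast_le (K := ℝ)).2 h

open Classical in
/-- If `f : F_q^{ℓ+m} → F_q` has total degree at most `d` and is not
exactly linear in the first `ℓ` variables, then the fraction of `y ∈ F_q^m` for which the
restriction `x ↦ f(x,y)` is exactly linear is at most `d/q`. -/
theorem not_exactly_linear_restriction {F : Type*} [Field F] [Fintype F] {l m d : ℕ}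
    (f : MvPolynomial (Fin l ⊕ Fin m) F) (hd : f.totalDegree ≤ d)
    (hf : ¬ ExactlyLinearInX f) :
    ((Finset.univ.filter fun y : Fin m → F => ExactlyLinear (restrictY f y)).card : ℝ) /
      (Fintype.card (Fin m → F) : ℝ) ≤ (d : ℝ) / (Fintype.card F : ℝ) := by
  set P := sumAlgEquiv F (Fin l) (Fin m) f
  obtain ⟨α, hα, hPα⟩ :=
    exists_coeff_ne_zero_of_not_exactlyLinear (exactlyLinearInX_iff.not.mp hf)
  calc _ ≤ (#{y : Fin m → F | eval y (coeff α P) = 0} : ℝ) / Fintype.card (Fin m → F) := by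
        gcongr
        intro hy
        rw [← coeff_restrictY]
        exact hy.coeff_eq_zero hα
    _ ≤ (coeff α P).totalDegree / Fintype.card F := card_filter_eval_eq_zero_div_le hPα
    _ ≤ d / Fintype.card F := by
        gcongr
        exact (totalDegree_coeff_sumAlgEquiv_le f α).trans hd
end

section
/- Let F ⊆ F_q^m be a set of size at most k. Consider the distribution D_twostep on F_q^m generated by: (i) choosing a uniformly random affine (or linear) subspace s of dimension k+1 containing F, and (ii) choosing a uniformly random point x in s. Let D_unif be the uniform distribution on F_q^m. Then the total variation distance between D_twostep and D_unif is at most 1/q. -/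
/-!
Let `U` be the span of the given set; it has dimension at most `k`, and the `(k+1)`-dimensional
subspaces through the set are exactly those containing `U`. Every one of them contains each point
of `U`, so the two-step density equals `q^{-(k+1)}` on `U`. Off `U` it is constant: for `x ∉ U`
it is proportional to the number of `(k+1)`-dimensional subspaces containing `U ⊔ ⟨x⟩`, which,
passing to the quotient by that space, depends only on its dimension `dim U + 1`. A density that
dominates the uniform one on `U` and is constant off `U` is at total variation distance
`∑_{x ∈ U} (q^{-(k+1)} - q^{-m}) ≤ q^k q^{-(k+1)} = 1/q`.
-/

open Finset Module Submodule

theorem half_sum_abs_eq_sum_filter_of_const {ι : Type*} [Fintype ι] (p : ι → Prop)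
    [DecidablePred p] (f : ι → ℝ) (hsum : ∑ i, f i = 0) (hp : ∀ i, p i → 0 ≤ f i)
    (hconst : ∀ i j, ¬ p i → ¬ p j → f i = f j) :
    (1 / 2) * ∑ i, |f i| = ∑ i with p i, f i := by
  have hsplit := sum_filter_add_sum_filter_not univ p f
  have hnonneg : 0 ≤ ∑ i with p i, f i := sum_nonneg fun i hi => hp i (mem_filter.1 hi).2
  -- the constant value off `p` is forced to be nonpositive, since `f` sums to zero
  have hnonpos : ∀ i, ¬ p i → f i ≤ 0 := by
    intro i hi
    have hcard : (0 : ℝ) < #{j | ¬ p j} := by exact_mod_cast card_pos.2 ⟨i, by simpa⟩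
    rw [sum_congr rfl fun j hj => hconst j i (mem_filter.1 hj).2 hi, sum_const,
      nsmul_eq_mul] at hsplit
    nlinarith
  rw [← sum_filter_add_sum_filter_not univ p,
    sum_congr rfl fun i hi => abs_of_nonneg (hp i (mem_filter.1 hi).2),
    sum_congr rfl fun i hi => abs_of_nonpos (hnonpos i (mem_filter.1 hi).2), sum_neg_distrib]
  linarith

namespace Submodule

variable {K E : Type*} [Field K] [AddCommGroup E] [Module K E] [FiniteDimensional K E]

theorem exists_le_finrank_eq (U : Submodule K E) {r : ℕ} (hUr : finrank K U ≤ r)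
    (hr : r ≤ finrank K E) : ∃ W, U ≤ W ∧ finrank K W = r := by
  induction r, hUr using Nat.le_induction with
  | base => exact ⟨U, le_rfl, rfl⟩
  | succ n _ ih =>
    obtain ⟨W, hUW, hWn⟩ := ih (by omega)
    obtain ⟨x, hx⟩ := W.exists_of_finrank_lt (by omega)
    have hxW : x ∉ W := by simpa using hx 1 one_ne_zero
    exact ⟨W ⊔ K ∙ x, hUW.trans le_sup_left, by rw [finrank_sup_span_singleton hxW, hWn]⟩

theorem finrank_map_mkQ_add_finrank {U W : Submodule K E} (h : U ≤ W) :
    finrank K (W.map U.mkQ) + finrank K U = finrank K W := by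
  have := LinearMap.finrank_range_add_finrank_ker (U.mkQ.domRestrict W)
  rwa [LinearMap.range_domRestrict, LinearMap.ker_domRestrict, ker_mkQ,
    (comapSubtypeEquivOfLe h).finrank_eq] at this

/-- The correspondence theorem, restricted to subspaces of a given dimension. -/
noncomputable def finrankEqLeEquivQuotient (U : Submodule K E) (r : ℕ) :
    {W : Submodule K E // finrank K W = r ∧ U ≤ W} ≃
      {W' : Submodule K (E ⧸ U) // finrank K W' + finrank K U = r} where
  toFun W := ⟨W.1.map U.mkQ, (finrank_map_mkQ_add_finrank W.2.2).trans W.2.1⟩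
  invFun W' := ⟨W'.1.comap U.mkQ, by
    have hle : U ≤ W'.1.comap U.mkQ := le_comap_mkQ U _
    rw [← finrank_map_mkQ_add_finrank hle, map_comap_eq_self (by simp)]
    exact ⟨W'.2, hle⟩⟩
  left_inv W := Subtype.ext <| by simpa [comap_map_mkQ] using W.2.2
  right_inv W' := Subtype.ext <| map_comap_eq_self (by simp)

theorem natCard_finrank_eq_le_congr {U₁ U₂ : Submodule K E}
    (h : finrank K U₁ = finrank K U₂) (r : ℕ) :
    Nat.card {W : Submodule K E // finrank K W = r ∧ U₁ ≤ W} =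
      Nat.card {W : Submodule K E // finrank K W = r ∧ U₂ ≤ W} := by
  have hquot : finrank K (E ⧸ U₁) = finrank K (E ⧸ U₂) := by
    have h₁ := U₁.finrank_quotient_add_finrank
    have h₂ := U₂.finrank_quotient_add_finrank
    omega
  let e := LinearEquiv.ofFinrankEq _ _ hquot
  refine Nat.card_congr <| (finrankEqLeEquivQuotient U₁ r).trans <|
    Equiv.trans ?_ (finrankEqLeEquivQuotient U₂ r).symm
  exact (orderIsoMapComap e).toEquiv.subtypeEquiv fun W' => by
    change _ ↔ finrank K (W'.map (e : E ⧸ U₁ →ₗ[K] E ⧸ U₂)) + _ = r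
    rw [h, LinearEquiv.finrank_map_eq]

end Submodule

section TwoStepDensity

variable {R E : Type*} [Semiring R] [AddCommMonoid E] [Module R E]

open Classical in
noncomputable def twoStepDensity (𝒲 : Finset (Submodule R E)) (x : E) : ℝ :=
  (#𝒲 : ℝ)⁻¹ * ∑ W ∈ 𝒲, if x ∈ W then (Nat.card W : ℝ)⁻¹ else 0

theorem sum_twoStepDensity [Fintype E] {𝒲 : Finset (Submodule R E)} (h𝒲 : 𝒲.Nonempty) :
    ∑ x, twoStepDensity 𝒲 x = 1 := by
  classical
  have huniform : ∀ W : Submodule R E,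
      ∑ x, (if x ∈ W then (Nat.card W : ℝ)⁻¹ else 0) = 1 := by
    intro W
    have hW : (Nat.card W : ℝ) ≠ 0 := by exact_mod_cast Nat.card_pos.ne'
    rw [sum_ite, sum_const_zero, add_zero, sum_const, nsmul_eq_mul, ← Fintype.card_subtype,
      ← Nat.card_eq_fintype_card, mul_inv_cancel₀ hW]
  simp only [twoStepDensity]
  rw [← mul_sum, sum_comm]
  simp only [huniform, sum_const, nsmul_eq_mul, mul_one]
  exact inv_mul_cancel₀ (by exact_mod_cast h𝒲.card_pos.ne')

open Classical in
theorem twoStepDensity_eq_of_natCard_eq {𝒲 : Finset (Submodule R E)} {n : ℕ}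
    (h : ∀ W ∈ 𝒲, Nat.card W = n) (x : E) :
    twoStepDensity 𝒲 x = #{W ∈ 𝒲 | x ∈ W} / (#𝒲 * n) := by
  rw [twoStepDensity, sum_ite, sum_const_zero, add_zero,
    sum_congr rfl fun W hW => by rw [h W (mem_filter.1 hW).1], sum_const, nsmul_eq_mul]
  field_simp

end TwoStepDensity

section SubspacesAbove

variable {K E : Type*} [Field K] [AddCommGroup E] [Module K E] [Fintype (Submodule K E)]

open Classical in
noncomputable def subspacesAbove (U : Submodule K E) (r : ℕ) : Finset (Submodule K E) :=
  {W | finrank K W = r ∧ U ≤ W}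

theorem mem_subspacesAbove {U W : Submodule K E} {r : ℕ} :
    W ∈ subspacesAbove U r ↔ finrank K W = r ∧ U ≤ W := by
  simp [subspacesAbove]

open Classical in
theorem filter_mem_subspacesAbove (U : Submodule K E) (r : ℕ) (x : E) :
    {W ∈ subspacesAbove U r | x ∈ W} = subspacesAbove (U ⊔ K ∙ x) r := by
  ext W
  simp only [mem_filter, mem_subspacesAbove, sup_le_iff, span_singleton_le_iff_mem, and_assoc]

variable [FiniteDimensional K E]

theorem subspacesAbove_nonempty {U : Submodule K E} {r : ℕ} (hUr : finrank K U ≤ r)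
    (hr : r ≤ finrank K E) : (subspacesAbove U r).Nonempty := by
  obtain ⟨W, hUW, hW⟩ := U.exists_le_finrank_eq hUr hr
  exact ⟨W, mem_subspacesAbove.2 ⟨hW, hUW⟩⟩

theorem card_subspacesAbove_congr {U₁ U₂ : Submodule K E} (h : finrank K U₁ = finrank K U₂)
    (r : ℕ) : #(subspacesAbove U₁ r) = #(subspacesAbove U₂ r) := by
  classical
  simpa only [subspacesAbove, Nat.card_eq_fintype_card, Fintype.card_subtype]
    using natCard_finrank_eq_le_congr h r

theorem twoStepDensity_subspacesAbove (U : Submodule K E) (r : ℕ) (x : E) :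
    twoStepDensity (subspacesAbove U r) x =
      #(subspacesAbove (U ⊔ K ∙ x) r) / (#(subspacesAbove U r) * Nat.card K ^ r) := by
  classical
  rw [twoStepDensity_eq_of_natCard_eq (n := Nat.card K ^ r), filter_mem_subspacesAbove]
  · rw [Nat.cast_pow]
  intro W hW
  rw [natCard_eq_pow_finrank (K := K), (mem_subspacesAbove.1 hW).1]

theorem twoStepDensity_subspacesAbove_of_mem {U : Submodule K E} {r : ℕ}
    (hne : (subspacesAbove U r).Nonempty) {x : E} (hx : x ∈ U) :
    twoStepDensity (subspacesAbove U r) x = ((Nat.card K : ℝ) ^ r)⁻¹ := by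
  rw [twoStepDensity_subspacesAbove, sup_eq_left.2 ((span_singleton_le_iff_mem x U).2 hx),
    div_mul_eq_div_div, div_self (by exact_mod_cast hne.card_pos.ne'), one_div]

theorem twoStepDensity_subspacesAbove_eq_of_notMem (U : Submodule K E) (r : ℕ) {x y : E}
    (hx : x ∉ U) (hy : y ∉ U) :
    twoStepDensity (subspacesAbove U r) x = twoStepDensity (subspacesAbove U r) y := by
  rw [twoStepDensity_subspacesAbove, twoStepDensity_subspacesAbove,
    card_subspacesAbove_congr (U₂ := U ⊔ K ∙ y)
      (by rw [finrank_sup_span_singleton hx, finrank_sup_span_singleton hy])]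

end SubspacesAbove

theorem half_sum_abs_twoStepDensity_sub_uniform {K E : Type*} [Field K] [Finite K]
    [AddCommGroup E] [Module K E] [Fintype E] [Fintype (Submodule K E)] (U : Submodule K E)
    {r : ℕ} (hUr : finrank K U ≤ r) (hr : r ≤ finrank K E) :
    (1 / 2) * ∑ x, |twoStepDensity (subspacesAbove U r) x - (Fintype.card E : ℝ)⁻¹| =
      Nat.card U * (((Nat.card K : ℝ) ^ r)⁻¹ - (Fintype.card E : ℝ)⁻¹) := by
  classical
  have hne := subspacesAbove_nonempty hUr hr
  have hq : (1 : ℝ) ≤ Nat.card K := by exact_mod_cast Nat.card_pos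
  have hE : (Fintype.card E : ℝ) = (Nat.card K : ℝ) ^ finrank K E := by
    rw [← Nat.card_eq_fintype_card, natCard_eq_pow_finrank (K := K), Nat.cast_pow]
  rw [half_sum_abs_eq_sum_filter_of_const (· ∈ U)]
  · rw [sum_congr rfl fun x hx =>
      by rw [twoStepDensity_subspacesAbove_of_mem hne (mem_filter.1 hx).2], sum_const,
      nsmul_eq_mul, ← Fintype.card_subtype, ← Nat.card_eq_fintype_card]
  · rw [sum_sub_distrib, sum_twoStepDensity hne, sum_const, card_univ, nsmul_eq_mul,
      mul_inv_cancel₀ (by positivity), sub_self]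
  · intro x hx
    rw [twoStepDensity_subspacesAbove_of_mem hne hx, sub_nonneg, hE]
    exact inv_anti₀ (by positivity) (pow_le_pow_right₀ hq hr)
  · intro x y hx hy
    rw [twoStepDensity_subspacesAbove_eq_of_notMem U r hx hy]

open Classical in
/-- Let `F ⊆ F_q^m` have size at most `k`, with `m > k+1`.  Consider the
distribution on `F_q^m` obtained by first choosing a uniformly random `(k+1)`-dimensional
subspace `s` containing `F` and then a uniformly random point of `s`.  Its total variation
distance from the uniform distribution on `F_q^m` is at most `1/q`. -/
theorem twostep_subspace_point_close_to_uniform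
    (F : Type*) [Field F] [Fintype F] (m k : ℕ) (hm : k + 1 < m)
    (S : Finset (Fin m → F)) (hS : S.card ≤ k)
    [Fintype (Submodule F (Fin m → F))] :
    letI subs : Finset (Submodule F (Fin m → F)) :=
      Finset.univ.filter fun W =>
        Module.finrank F W = k + 1 ∧ ∀ x ∈ S, x ∈ W
    letI Dtwo : (Fin m → F) → ℝ := fun x =>
      (subs.card : ℝ)⁻¹ *
        ∑ W ∈ subs, (if x ∈ W then ((Nat.card W : ℝ))⁻¹ else 0)
    letI Dunif : (Fin m → F) → ℝ := fun _ => (Fintype.card (Fin m → F) : ℝ)⁻¹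
    (1 / 2 : ℝ) * ∑ x : Fin m → F, |Dtwo x - Dunif x| ≤ 1 / (Fintype.card F : ℝ) := by
  set U := span F (S : Set (Fin m → F))
  have hsubs : ({W | finrank F W = k + 1 ∧ ∀ x ∈ S, x ∈ W} : Finset (Submodule F (Fin m → F))) =
      subspacesAbove U (k + 1) := by
    ext W
    simp [mem_subspacesAbove, U, span_le, Set.subset_def]
  simp only [hsubs]
  have hUk : finrank F U ≤ k := (finrank_span_finset_le_card S).trans hS
  have hq : (1 : ℝ) ≤ Fintype.card F := by exact_mod_cast Fintype.card_pos
  change (1 / 2) * ∑ x, |twoStepDensity (subspacesAbove U (k + 1)) x -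
    (Fintype.card (Fin m → F) : ℝ)⁻¹| ≤ _
  rw [half_sum_abs_twoStepDensity_sub_uniform U (by omega) (by rw [finrank_fin_fun]; omega),
    natCard_eq_pow_finrank (K := F), Nat.card_eq_fintype_card, Fintype.card_fun, Fintype.card_fin]
  push_cast
  calc (Fintype.card F : ℝ) ^ finrank F U *
        (((Fintype.card F : ℝ) ^ (k + 1))⁻¹ - ((Fintype.card F : ℝ) ^ m)⁻¹)
      ≤ (Fintype.card F : ℝ) ^ k * ((Fintype.card F : ℝ) ^ (k + 1))⁻¹ := by
        gcongr
        · exact sub_nonneg.2 (inv_anti₀ (by positivity) (pow_le_pow_right₀ hq hm.le))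
        · exact sub_le_self _ (by positivity)
    _ = 1 / Fintype.card F := by field_simp; ring
end

section
/- Let 0 ⪯ A, B, C, D ⪯ I be operators on Hilbert spaces H_A and H_B (A, B on possibly different factors as written), and let |ψ⟩ be a unit vector in H_A ⊗ H_B. Then 1 − ⟨ψ|A⊗D|ψ⟩ ≤ (1 − ⟨ψ|A⊗B|ψ⟩) + (1 − ⟨ψ|B⊗C|ψ⟩) + (1 − ⟨ψ|C⊗D|ψ⟩). -/
open Kronecker Matrix
open scoped ComplexOrder

/-!
The operator `2 - (A ⊗ B + B ⊗ C + C ⊗ D - A ⊗ D)` is the sum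
`(1 - A) ⊗ (1 - D) + A ⊗ (1 - B) + (1 - B) ⊗ C + (1 - C) ⊗ D + 1 ⊗ (1 - C)`
of Kronecker products of positive semidefinite operators, hence is positive semidefinite;
taking its expectation in the unit vector `ψ` gives the inequality.
-/

namespace Matrix

section Kronecker

variable {l m n p α : Type*} [NonUnitalNonAssocRing α]

theorem sub_kronecker (A₁ A₂ : Matrix l m α) (B : Matrix n p α) :
    (A₁ - A₂) ⊗ₖ B = A₁ ⊗ₖ B - A₂ ⊗ₖ B := by
  ext ⟨i, j⟩ ⟨k, l⟩
  simp [sub_mul]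

theorem kronecker_sub (A : Matrix l m α) (B₁ B₂ : Matrix n p α) :
    A ⊗ₖ (B₁ - B₂) = A ⊗ₖ B₁ - A ⊗ₖ B₂ := by
  ext ⟨i, j⟩ ⟨k, l⟩
  simp [mul_sub]

end Kronecker

variable {n : Type*} [DecidableEq n]

theorem two_sub_kronecker_chain_eq {R : Type*} [CommRing R] (A B C D : Matrix n n R) :
    (2 : Matrix (n × n) (n × n) R) - (A ⊗ₖ B + B ⊗ₖ C + C ⊗ₖ D - A ⊗ₖ D) =
      (1 - A) ⊗ₖ (1 - D) + A ⊗ₖ (1 - B) + (1 - B) ⊗ₖ C + (1 - C) ⊗ₖ D + 1 ⊗ₖ (1 - C) := by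
  simp only [sub_kronecker, kronecker_sub, one_kronecker_one, ← one_add_one_eq_two]
  abel

theorem PosSemidef.two_sub_kronecker_chain [Fintype n] {𝕜 : Type*} [RCLike 𝕜] {A B C D : Matrix n n 𝕜}
    (hA : A.PosSemidef) (hA' : (1 - A).PosSemidef) (hB' : (1 - B).PosSemidef)
    (hC : C.PosSemidef) (hC' : (1 - C).PosSemidef)
    (hD : D.PosSemidef) (hD' : (1 - D).PosSemidef) :
    ((2 : Matrix (n × n) (n × n) 𝕜) - (A ⊗ₖ B + B ⊗ₖ C + C ⊗ₖ D - A ⊗ₖ D)).PosSemidef := by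
  rw [two_sub_kronecker_chain_eq]
  exact ((((hA'.kronecker hD').add (hA.kronecker hB')).add (hB'.kronecker hC)).add
    (hC'.kronecker hD)).add (PosSemidef.one.kronecker hC')

end Matrix

theorem one_sub_inner_tensor_triangle_general {I : Type*} [Fintype I] [DecidableEq I]
    (A B C D : Matrix I I ℂ)
    (hA : A.PosSemidef) (hA' : (1 - A).PosSemidef)
    (hB' : (1 - B).PosSemidef)
    (hC : C.PosSemidef) (hC' : (1 - C).PosSemidef)
    (hD : D.PosSemidef) (hD' : (1 - D).PosSemidef)
    (ψ : I × I → ℂ) (hψ : star ψ ⬝ᵥ ψ = 1) :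
    1 - (star ψ ⬝ᵥ (A ⊗ₖ D).mulVec ψ).re ≤
      (1 - (star ψ ⬝ᵥ (A ⊗ₖ B).mulVec ψ).re) +
        (1 - (star ψ ⬝ᵥ (B ⊗ₖ C).mulVec ψ).re) +
          (1 - (star ψ ⬝ᵥ (C ⊗ₖ D).mulVec ψ).re) := by
  have hψ2 : star ψ ⬝ᵥ (2 : Matrix (I × I) (I × I) ℂ).mulVec ψ = 2 := by
    rw [← one_add_one_eq_two, add_mulVec, one_mulVec, dotProduct_add, hψ, one_add_one_eq_two]
  have h := Complex.nonneg_iff.mp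
    ((PosSemidef.two_sub_kronecker_chain hA hA' hB' hC hC' hD hD').dotProduct_mulVec_nonneg ψ)
  simp only [sub_mulVec, add_mulVec, dotProduct_sub, dotProduct_add, hψ2, Complex.sub_re,
    Complex.add_re, Complex.re_ofNat] at h
  linarith [h.1]

/-- Let `0 ⪯ A, B, C, D ⪯ I` be operators and `|ψ⟩` a unit bipartite
state.  Then `1 − ⟨ψ|A⊗D|ψ⟩ ≤ (1 − ⟨ψ|A⊗B|ψ⟩) + (1 − ⟨ψ|B⊗C|ψ⟩) + (1 − ⟨ψ|C⊗D|ψ⟩)`. -/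
theorem one_sub_inner_tensor_triangle {I : Type*} [Fintype I] [DecidableEq I]
    (A B C D : Matrix I I ℂ)
    (hA : A.PosSemidef) (hA' : (1 - A).PosSemidef)
    (hB : B.PosSemidef) (hB' : (1 - B).PosSemidef)
    (hC : C.PosSemidef) (hC' : (1 - C).PosSemidef)
    (hD : D.PosSemidef) (hD' : (1 - D).PosSemidef)
    (ψ : I × I → ℂ) (hψ : star ψ ⬝ᵥ ψ = 1) :
    1 - (star ψ ⬝ᵥ (A ⊗ₖ D).mulVec ψ).re ≤
      (1 - (star ψ ⬝ᵥ (A ⊗ₖ B).mulVec ψ).re) +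
        (1 - (star ψ ⬝ᵥ (B ⊗ₖ C).mulVec ψ).re) +
          (1 - (star ψ ⬝ᵥ (C ⊗ₖ D).mulVec ψ).re) :=
  one_sub_inner_tensor_triangle_general A B C D hA hA' hB' hC hC' hD hD' ψ hψ
end

section
/- Let {M_{a,b}} be a projective measurement on a tensor product Hilbert space H_1 ⊗ H_2 (i.e., the M_{a,b} are mutually orthogonal projectors summing to the identity). Suppose that for every a the marginal M_a = Σ_b M_{a,b} factors as A_a ⊗ B_a where A_a = |ψ_a⟩⟨ψ_a| is a rank-one projector on H_1. Then for all a, b there exist projectors C_{a,b} on H_2 such that M_{a,b} = |ψ_a⟩⟨ψ_a| ⊗ C_{a,b}. -/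
/-!
Orthogonality of the `M a b` for fixed `a` gives `M a b = M_a * M a b * M_a`. Compressing any
matrix between two factors `|ψ⟩⟨ψ| ⊗ B` leaves a matrix of the form `|ψ⟩⟨ψ| ⊗ C`, and since
`|ψ⟩⟨ψ| ≠ 0`, the map `C ↦ |ψ⟩⟨ψ| ⊗ C` is injective, so hermiticity and idempotency of `M a b`
descend to `C`.
-/

open Kronecker Matrix

lemma OrthogonalIdempotents.sum_mul_mul_sum {R ι : Type*} [Semiring R] [Fintype ι] {e : ι → R}
    (he : OrthogonalIdempotents e) (i : ι) : (∑ j, e j) * e i * (∑ j, e j) = e i := by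
  classical
  simp [Finset.mul_sum, Finset.sum_mul, he.mul_eq]

namespace Matrix

variable {R l m n p : Type*}

theorem kronecker_right_injective [MulZeroClass R] [IsLeftCancelMulZero R]
    {A : Matrix l m R} (hA : A ≠ 0) : Function.Injective (A ⊗ₖ · : Matrix n p R → _) := by
  obtain ⟨i, i', hAii'⟩ : ∃ i i', A i i' ≠ 0 := by
    by_contra! h
    exact hA (ext h)
  intro C C' hCC'
  ext j j'
  exact mul_left_cancel₀ hAii' congr($hCC' (i, j) (i', j'))

theorem exists_vecMulVec_kronecker_eq_mul_mul [CommSemiring R] [Fintype l] [Fintype m]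
    (u v u' v' : l → R) (B B' : Matrix m m R) (X : Matrix (l × m) (l × m) R) :
    ∃ C : Matrix m m R,
      vecMulVec u v ⊗ₖ B * X * (vecMulVec u' v' ⊗ₖ B') = vecMulVec u v' ⊗ₖ C := by
  refine ⟨of fun j j' ↦ ∑ p : l × m, ∑ q : l × m, v p.1 * B j p.2 * X p q * (u' q.1 * B' q.2 j'),
    ?_⟩
  ext ⟨i, j⟩ ⟨i', j'⟩
  simp only [mul_apply, kroneckerMap_apply, vecMulVec_apply, of_apply, Finset.sum_mul,
    Finset.mul_sum]
  rw [Finset.sum_comm]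
  exact Finset.sum_congr rfl fun q _ ↦ Finset.sum_congr rfl fun p _ ↦ by ring

section StarRing

variable [CommSemiring R] [StarRing R] {ψ : n → R}

theorem isHermitian_vecMulVec_star (ψ : n → R) : (vecMulVec ψ (star ψ)).IsHermitian := by
  simp [IsHermitian]

variable [Fintype n]

theorem vecMulVec_star_mul_self (hψ : star ψ ⬝ᵥ ψ = 1) :
    vecMulVec ψ (star ψ) * vecMulVec ψ (star ψ) = vecMulVec ψ (star ψ) := by
  rw [vecMulVec_mul_vecMulVec, hψ, one_smul]

theorem vecMulVec_star_ne_zero [NoZeroDivisors R] [Nontrivial R] (hψ : star ψ ⬝ᵥ ψ = 1) :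
    vecMulVec ψ (star ψ) ≠ 0 := by
  have hψ0 : ψ ≠ 0 := by
    rintro rfl
    simp at hψ
  exact vecMulVec_ne_zero hψ0 (star_ne_zero.mpr hψ0)

end StarRing

end Matrix

theorem marginal_rank_one_tensor_factorization_general
    {I J α β : Type*} [Fintype I] [Fintype J] [Fintype β]
    (M : α → β → Matrix (I × J) (I × J) ℂ)
    (hherm : ∀ a b, (M a b).IsHermitian)
    (hidem : ∀ a b, M a b * M a b = M a b)
    (horth : ∀ a b a' b', (a, b) ≠ (a', b') → M a b * M a' b' = 0)
    (ψ : α → I → ℂ) (hψ : ∀ a, star (ψ a) ⬝ᵥ ψ a = 1)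
    (B : α → Matrix J J ℂ)
    (hmarg : ∀ a, ∑ b, M a b = (Matrix.vecMulVec (ψ a) (star (ψ a))) ⊗ₖ B a) :
    ∀ a b, ∃ C : Matrix J J ℂ, C.IsHermitian ∧ C * C = C ∧
      M a b = (Matrix.vecMulVec (ψ a) (star (ψ a))) ⊗ₖ C := by
  classical
  intro a b
  set P := vecMulVec (ψ a) (star (ψ a))
  have hM_orth : OrthogonalIdempotents (M a) :=
    ⟨hidem a, fun b b' hbb' ↦ horth a b a b' (by simpa using hbb')⟩
  obtain ⟨C, hC⟩ := exists_vecMulVec_kronecker_eq_mul_mul (ψ a) (star (ψ a)) (ψ a) (star (ψ a))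
    (B a) (B a) (M a b)
  have hM : M a b = P ⊗ₖ C := by
    rw [← hC, ← hmarg, hM_orth.sum_mul_mul_sum]
  have hP_inj := kronecker_right_injective (n := J) (p := J) (vecMulVec_star_ne_zero (hψ a))
  refine ⟨C, hP_inj ?_, hP_inj ?_, hM⟩
  · calc P ⊗ₖ Cᴴ = (P ⊗ₖ C)ᴴ := by rw [conjTranspose_kronecker, (isHermitian_vecMulVec_star _).eq]
      _ = P ⊗ₖ C := by rw [← hM]; exact (hherm a b).eq
  · calc P ⊗ₖ (C * C) = (P * P) ⊗ₖ (C * C) := by rw [vecMulVec_star_mul_self (hψ a)]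
      _ = P ⊗ₖ C := by rw [mul_kronecker_mul, ← hM, hidem]

/-- Let `{M_{a,b}}` be a projective measurement on `H₁ ⊗ H₂` (mutually
orthogonal projectors summing to the identity).  Suppose that for every `a` the marginal
`M_a = Σ_b M_{a,b}` factors as `|ψ_a⟩⟨ψ_a| ⊗ B_a` with `|ψ_a⟩⟨ψ_a|` a rank-one projector
on `H₁`.  Then for all `a, b` there exist projectors `C_{a,b}` on `H₂` with
`M_{a,b} = |ψ_a⟩⟨ψ_a| ⊗ C_{a,b}`. -/
theorem marginal_rank_one_tensor_factorization
    {I J α β : Type*} [Fintype I] [Fintype J] [Fintype α] [Fintype β]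
    [DecidableEq I] [DecidableEq J]
    (M : α → β → Matrix (I × J) (I × J) ℂ)
    (hherm : ∀ a b, (M a b).IsHermitian)
    (hidem : ∀ a b, M a b * M a b = M a b)
    (horth : ∀ a b a' b', (a, b) ≠ (a', b') → M a b * M a' b' = 0)
    (hsum : ∑ a, ∑ b, M a b = 1)
    (ψ : α → I → ℂ) (hψ : ∀ a, star (ψ a) ⬝ᵥ ψ a = 1)
    (B : α → Matrix J J ℂ)
    (hmarg : ∀ a, ∑ b, M a b = (Matrix.vecMulVec (ψ a) (star (ψ a))) ⊗ₖ B a) :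
    ∀ a b, ∃ C : Matrix J J ℂ, C.IsHermitian ∧ C * C = C ∧
      M a b = (Matrix.vecMulVec (ψ a) (star (ψ a))) ⊗ₖ C :=
  marginal_rank_one_tensor_factorization_general M hherm hidem horth ψ hψ B hmarg
end

section
/- Let {A^x_a}, {B^x_a} be POVMs and |ψ⟩ a unit bipartite state with E_x Σ_a ‖(A^x_a⊗I − I⊗B^x_a)|ψ⟩‖² ≤ δ, and suppose {A^x_a} is projective for every x. Then 1 − E_x Σ_a ⟨ψ|A^x_a ⊗ B^x_a|ψ⟩ ≤ √δ, i.e., closeness in state-dependent distance with one projective side implies consistency up to a square-root loss. -/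
/-!
The consistency defect of question `x` is `Σ_a Re ⟨Pₐψ, (Pₐ - Qₐ)ψ⟩` with `Pₐ = Aₐ ⊗ I` and
`Qₐ = I ⊗ Bₐ`, because the `Pₐ` are orthogonal projections summing to the identity. By
Cauchy–Schwarz it is at most `(Σ_a ‖Pₐψ‖²)^{1/2} (Σ_a ‖(Pₐ - Qₐ)ψ‖²)^{1/2}`, and the first factor
is `‖ψ‖ = 1`. Averaging over `x`, concavity of the square root gives the bound `√δ`.
-/

open Kronecker Matrix
open scoped ComplexOrder

/-- The squared Hilbert-space norm `‖v‖² = ⟨v, v⟩` of a vector. -/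
noncomputable def nsq {I : Type*} [Fintype I] (v : I → ℂ) : ℝ := (star v ⬝ᵥ v).re

theorem Matrix.sum_kronecker {R l m n p α : Type*} [CommSemiring R] (s : Finset α)
    (A : α → Matrix l m R) (B : Matrix n p R) :
    (∑ a ∈ s, A a) ⊗ₖ B = ∑ a ∈ s, A a ⊗ₖ B :=
  map_sum ((kroneckerBilinear (R := R) (α := R)).flip B) A s

section

variable {n α : Type*} [Fintype n]

lemma nsq_eq_norm_sq (v : n → ℂ) : nsq v = ‖WithLp.toLp 2 v‖ ^ 2 := by
  rw [EuclideanSpace.norm_eq, Real.sq_sqrt (by positivity), nsq]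
  simp [dotProduct, Complex.re_sum, Complex.sq_norm, Complex.normSq_apply]

lemma nsq_nonneg (v : n → ℂ) : 0 ≤ nsq v := by
  rw [nsq_eq_norm_sq]
  positivity

lemma re_star_dotProduct_le (u w : n → ℂ) :
    (star u ⬝ᵥ w).re ≤ √(nsq u) * √(nsq w) := by
  rw [nsq_eq_norm_sq, nsq_eq_norm_sq, Real.sqrt_sq (norm_nonneg _),
    Real.sqrt_sq (norm_nonneg _), dotProduct_comm]
  exact re_inner_le_norm (𝕜 := ℂ) (WithLp.toLp 2 u) (WithLp.toLp 2 w)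

lemma sum_re_star_dotProduct_le [Fintype α] (u w : α → n → ℂ) :
    ∑ a, (star (u a) ⬝ᵥ w a).re ≤ √(∑ a, nsq (u a)) * √(∑ a, nsq (w a)) :=
  (Finset.sum_le_sum fun a _ => re_star_dotProduct_le (u a) (w a)).trans
    (Real.sum_sqrt_mul_sqrt_le _ (fun a => nsq_nonneg (u a)) fun a => nsq_nonneg (w a))

lemma star_mulVec_dotProduct_mulVec_of_isHermitian {P : Matrix n n ℂ} (hP : P.IsHermitian)
    (M : Matrix n n ℂ) (ψ : n → ℂ) :
    star (P *ᵥ ψ) ⬝ᵥ (M *ᵥ ψ) = star ψ ⬝ᵥ ((P * M) *ᵥ ψ) := by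
  rw [star_mulVec, ← dotProduct_mulVec, mulVec_mulVec, hP.eq]

lemma one_sub_sum_re_le_sqrt_sum_nsq_sub [Fintype α] [DecidableEq n]
    (P Q : α → Matrix n n ℂ) (hP : ∀ a, (P a).IsHermitian) (hPP : ∀ a, P a * P a = P a)
    (hPsum : ∑ a, P a = 1) (ψ : n → ℂ) (hψ : star ψ ⬝ᵥ ψ = 1) :
    1 - ∑ a, (star ψ ⬝ᵥ (P a * Q a) *ᵥ ψ).re ≤ √(∑ a, nsq ((P a - Q a) *ᵥ ψ)) := by
  have h_total : ∑ a, (star ψ ⬝ᵥ P a *ᵥ ψ).re = 1 := by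
    rw [← Complex.re_sum, ← dotProduct_sum, ← sum_mulVec, hPsum, one_mulVec, hψ,
      Complex.one_re]
  have h_nsq : ∀ a, nsq (P a *ᵥ ψ) = (star ψ ⬝ᵥ P a *ᵥ ψ).re := fun a => by
    rw [nsq, star_mulVec_dotProduct_mulVec_of_isHermitian (hP a), hPP]
  have h_inner : ∀ a, (star (P a *ᵥ ψ) ⬝ᵥ (P a - Q a) *ᵥ ψ).re =
      (star ψ ⬝ᵥ P a *ᵥ ψ).re - (star ψ ⬝ᵥ (P a * Q a) *ᵥ ψ).re := fun a => by
    rw [star_mulVec_dotProduct_mulVec_of_isHermitian (hP a), Matrix.mul_sub, hPP, sub_mulVec,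
      dotProduct_sub, Complex.sub_re]
  calc 1 - ∑ a, (star ψ ⬝ᵥ (P a * Q a) *ᵥ ψ).re
      = ∑ a, (star (P a *ᵥ ψ) ⬝ᵥ (P a - Q a) *ᵥ ψ).re := by
        simp only [h_inner, Finset.sum_sub_distrib, h_total]
    _ ≤ √(∑ a, nsq (P a *ᵥ ψ)) * √(∑ a, nsq ((P a - Q a) *ᵥ ψ)) :=
        sum_re_star_dotProduct_le _ _
    _ = √(∑ a, nsq ((P a - Q a) *ᵥ ψ)) := by
        simp only [h_nsq, h_total, Real.sqrt_one, one_mul]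

end

theorem state_dependent_distance_implies_consistency_general
    {X α I J : Type*} [Fintype X] [Fintype α] [Fintype I] [Fintype J]
    [DecidableEq I] [DecidableEq J]
    (μ : X → ℝ) (hμ0 : ∀ x, 0 ≤ μ x) (hμ1 : ∑ x, μ x = 1)
    (A : X → α → Matrix I I ℂ) (B : X → α → Matrix J J ℂ)
    (hA : ∀ x a, (A x a).PosSemidef) (hAsum : ∀ x, ∑ a, A x a = 1)
    (hAproj : ∀ x a, A x a * A x a = A x a)
    (ψ : I × J → ℂ) (hψ : star ψ ⬝ᵥ ψ = 1) (δ : ℝ)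
    (hdist : ∑ x, μ x * ∑ a,
        nsq ((A x a ⊗ₖ (1 : Matrix J J ℂ) -
          (1 : Matrix I I ℂ) ⊗ₖ B x a).mulVec ψ) ≤ δ) :
    1 - ∑ x, μ x * ∑ a, (star ψ ⬝ᵥ (A x a ⊗ₖ B x a).mulVec ψ).re ≤ Real.sqrt δ := by
  set d : X → ℝ := fun x => ∑ a,
    nsq ((A x a ⊗ₖ (1 : Matrix J J ℂ) - (1 : Matrix I I ℂ) ⊗ₖ B x a) *ᵥ ψ)
  have h_question : ∀ x, 1 - ∑ a, (star ψ ⬝ᵥ (A x a ⊗ₖ B x a) *ᵥ ψ).re ≤ √(d x) := by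
    intro x
    have h_split : ∀ a, A x a ⊗ₖ B x a = (A x a ⊗ₖ (1 : Matrix J J ℂ)) * (1 ⊗ₖ B x a) := by
      simp [← mul_kronecker_mul]
    simp only [h_split]
    refine one_sub_sum_re_le_sqrt_sum_nsq_sub _ _ (fun a => ?_) (fun a => ?_) ?_ ψ hψ
    · rw [IsHermitian, conjTranspose_kronecker, (hA x a).isHermitian.eq, conjTranspose_one]
    · rw [← mul_kronecker_mul, hAproj, one_mul]
    · rw [← sum_kronecker, hAsum, one_kronecker_one]
  calc 1 - ∑ x, μ x * ∑ a, (star ψ ⬝ᵥ (A x a ⊗ₖ B x a) *ᵥ ψ).re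
      = ∑ x, μ x * (1 - ∑ a, (star ψ ⬝ᵥ (A x a ⊗ₖ B x a) *ᵥ ψ).re) := by
        simp only [mul_sub, mul_one, Finset.sum_sub_distrib, hμ1]
    _ ≤ ∑ x, μ x * √(d x) :=
        Finset.sum_le_sum fun x _ => mul_le_mul_of_nonneg_left (h_question x) (hμ0 x)
    _ ≤ √(∑ x, μ x * d x) := by
        simpa using Real.strictConcaveOn_sqrt.concaveOn.le_map_sum (fun x _ => hμ0 x) hμ1
          (fun x _ => Set.mem_Ici.mpr (Finset.sum_nonneg fun a _ => nsq_nonneg _))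
    _ ≤ √δ := Real.sqrt_le_sqrt hdist

/-- Let `{A^x_a}`, `{B^x_a}` be POVMs and `|ψ⟩` a unit bipartite state
with `E_x Σ_a ‖(A^x_a ⊗ I − I ⊗ B^x_a)|ψ⟩‖² ≤ δ`, and suppose `{A^x_a}` is projective
for every `x`.  Then `1 − E_x Σ_a ⟨ψ|A^x_a ⊗ B^x_a|ψ⟩ ≤ √δ`: closeness in the
state-dependent distance with one projective side implies consistency up to a square-root
loss. -/
theorem state_dependent_distance_implies_consistency
    {X α I J : Type*} [Fintype X] [Fintype α] [Fintype I] [Fintype J]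
    [DecidableEq I] [DecidableEq J]
    (μ : X → ℝ) (hμ0 : ∀ x, 0 ≤ μ x) (hμ1 : ∑ x, μ x = 1)
    (A : X → α → Matrix I I ℂ) (B : X → α → Matrix J J ℂ)
    (hA : ∀ x a, (A x a).PosSemidef) (hAsum : ∀ x, ∑ a, A x a = 1)
    (hAproj : ∀ x a, A x a * A x a = A x a)
    (hB : ∀ x a, (B x a).PosSemidef) (hBsum : ∀ x, ∑ a, B x a = 1)
    (ψ : I × J → ℂ) (hψ : star ψ ⬝ᵥ ψ = 1) (δ : ℝ)
    (hdist : ∑ x, μ x * ∑ a,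
        nsq ((A x a ⊗ₖ (1 : Matrix J J ℂ) -
          (1 : Matrix I I ℂ) ⊗ₖ B x a).mulVec ψ) ≤ δ) :
    1 - ∑ x, μ x * ∑ a, (star ψ ⬝ᵥ (A x a ⊗ₖ B x a).mulVec ψ).re ≤ Real.sqrt δ :=
  state_dependent_distance_implies_consistency_general μ hμ0 hμ1 A B hA hAsum hAproj ψ hψ δ hdist
end
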